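/- arXiv:1312.7105 — 4 statements merged into one kernel-verified Lean document; each statement's English description precedes it below -/
import Mathlib

section
/- Let P_0, P_1 be polynomials of degree at most m, not both zero, such that the Padé remainder T(z) := P_0(z) + P_1(z) f(z) satisfies T(z) = O(z^{-m-1}) as z → ∞. Then for every polynomial p of degree at most m − 1 and every r > R, ∮_{|ζ|=r} P_1(ζ) p(ζ) f(ζ) dζ = 0. -/
/-!
Write `P₁ p f = p T - p P₀` with `T = P₀ + P₁ f`. The polynomial `p P₀` integrates to zero by
Cauchy's theorem. The function `p T` is holomorphic on `|z| > R`, so its integral over `|z| = r`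
does not depend on `r > R`; since `deg p < m` and `T = O(z^{-m-1})`, it is `o(1/z)` at infinity,
so that integral is bounded by `2π r · o(1/r) → 0`.
-/

open Metric Bornology Asymptotics Polynomial Filter Real

section CircleIntegralAtInfinity

variable {E : Type*} [NormedAddCommGroup E] [NormedSpace ℂ E]

theorem circleIntegral_eq_of_differentiableOn_norm_gt {R r s : ℝ} {g : ℂ → E} (hR : 0 ≤ R)
    (hr : R < r) (hrs : r ≤ s) (hg : DifferentiableOn ℂ g {z | R < ‖z‖}) :
    (∮ z in C(0, s), g z) = ∮ z in C(0, r), g z := by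
  have hsub : ∀ z ∈ (closedBall (0 : ℂ) s \ ball 0 r), R < ‖z‖ := fun z hz =>
    hr.trans_le (by simpa using hz.2)
  refine Complex.circleIntegral_eq_of_differentiable_on_annulus_off_countable
    (hR.trans_lt hr) hrs Set.countable_empty (hg.continuousOn.mono hsub) fun z hz => ?_
  have hz : R < ‖z‖ := hr.trans (by simpa using hz.1.2)
  exact hg.differentiableAt ((isOpen_lt continuous_const continuous_norm).mem_nhds hz)

theorem circleIntegral_eq_zero_of_isLittleO_inv {R r : ℝ} {g : ℂ → E} (hR : 0 ≤ R) (hr : R < r)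
    (hg : DifferentiableOn ℂ g {z | R < ‖z‖}) (hdecay : g =o[cobounded ℂ] (·⁻¹)) :
    (∮ z in C(0, r), g z) = 0 := by
  have hsmall : ∀ ε > 0, ‖∮ z in C(0, r), g z‖ ≤ ε := by
    intro ε hε
    obtain ⟨M, -, hM⟩ := hasBasis_cobounded_norm.eventually_iff.1
      (hdecay.bound (div_pos hε two_pi_pos))
    set s := max r M
    have hs : 0 < s := (hR.trans_lt hr).trans_le (le_max_left _ _)
    rw [← circleIntegral_eq_of_differentiableOn_norm_gt hR hr (le_max_left _ _) hg]
    calc ‖∮ z in C(0, s), g z‖ ≤ 2 * π * s * (ε / (2 * π) * s⁻¹) := by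
          refine circleIntegral.norm_integral_le_of_norm_le_const hs.le fun z hz => ?_
          rw [mem_sphere_zero_iff_norm] at hz
          simpa [hz] using hM (show M ≤ ‖z‖ from hz ▸ le_max_right _ _)
      _ = ε := by field_simp
  exact norm_le_zero_iff.1 (le_of_forall_gt_imp_ge_of_dense hsmall)

end CircleIntegralAtInfinity

theorem isBigO_cobounded_inv_pow_of_norm_pow_mul_le {𝕜 : Type*} [NormedField 𝕜] {k : ℕ}
    {h : 𝕜 → 𝕜} (hbound : ∃ C R : ℝ, ∀ z : 𝕜, R < ‖z‖ → ‖z ^ k * h z‖ ≤ C) :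
    h =O[cobounded 𝕜] fun z => (z ^ k)⁻¹ := by
  obtain ⟨C, R, hC⟩ := hbound
  refine IsBigO.of_bound C ?_
  filter_upwards [eventually_cobounded_le_norm (max R 0 + 1)] with z hz
  have hz0 : z ≠ 0 := norm_pos_iff.1 (by linarith [le_max_right R 0])
  have hzR : R < ‖z‖ := by linarith [le_max_left R 0]
  calc ‖h z‖ = ‖z ^ k * h z‖ * ‖(z ^ k)⁻¹‖ := by
        rw [← norm_mul, mul_comm (z ^ k), mul_assoc, mul_inv_cancel₀ (pow_ne_zero k hz0), mul_one]
    _ ≤ C * ‖(z ^ k)⁻¹‖ := mul_le_mul_of_nonneg_right (hC z hzR) (norm_nonneg _)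

theorem Polynomial.isLittleO_cobounded_eval_mul_inv {𝕜 : Type*} [NormedField 𝕜] {p : 𝕜[X]}
    {m : ℕ} {T : 𝕜 → 𝕜} (hp : p.degree < m) (hT : T =O[cobounded 𝕜] fun z => (z ^ (m + 1))⁻¹) :
    (fun z => p.eval z * T z) =o[cobounded 𝕜] (·⁻¹) := by
  have hpX : p.eval =o[cobounded 𝕜] (X ^ m : 𝕜[X]).eval :=
    isLittleO_cobounded_of_degree_lt (by rwa [degree_X_pow])
  refine (hpX.mul_isBigO hT).congr' .rfl ?_
  filter_upwards [eventually_cobounded_le_norm 1] with z hz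
  have hz0 : z ≠ 0 := norm_pos_iff.1 (zero_lt_one.trans_le hz)
  simp only [eval_pow, eval_X]
  field_simp
  ring

theorem stmt_2_general
    (R : ℝ) (hR : 0 < R) (f : ℂ → ℂ)
    (hf : DifferentiableOn ℂ f {z : ℂ | R < ‖z‖})
    (m : ℕ) (P₀ P₁ : Polynomial ℂ)
    (hrem : ∃ C R' : ℝ, ∀ z : ℂ, R' < ‖z‖ →
      ‖z ^ (m + 1) * (P₀.eval z + P₁.eval z * f z)‖ ≤ C) :
    ∀ p : Polynomial ℂ, p.degree < m → ∀ r : ℝ, R < r →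
      (∮ ζ in C(0, r), P₁.eval ζ * p.eval ζ * f ζ) = 0 := by
  intro p hp r hr
  have hr0 : 0 ≤ r := (hR.trans hr).le
  have hpP₀ : (∮ ζ in C(0, r), p.eval ζ * P₀.eval ζ) = 0 :=
    Complex.circleIntegral_eq_zero_of_differentiable_on_off_countable hr0 Set.countable_empty
      (p.continuous.mul P₀.continuous).continuousOn
      fun z _ => (p.differentiable.mul P₀.differentiable).differentiableAt
  have hT : DifferentiableOn ℂ (fun z => p.eval z * (P₀.eval z + P₁.eval z * f z))
      {z | R < ‖z‖} :=
    p.differentiable.differentiableOn.mul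
      (P₀.differentiable.differentiableOn.add (P₁.differentiable.differentiableOn.mul hf))
  have hpT : (∮ ζ in C(0, r), p.eval ζ * (P₀.eval ζ + P₁.eval ζ * f ζ)) = 0 :=
    circleIntegral_eq_zero_of_isLittleO_inv hR.le hr hT
      (isLittleO_cobounded_eval_mul_inv hp (isBigO_cobounded_inv_pow_of_norm_pow_mul_le hrem))
  have hsphere : sphere (0 : ℂ) r ⊆ {z | R < ‖z‖} := fun z hz => by
    simpa [mem_sphere_zero_iff_norm.1 hz] using hr
  calc (∮ ζ in C(0, r), P₁.eval ζ * p.eval ζ * f ζ)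
      = (∮ ζ in C(0, r), p.eval ζ * (P₀.eval ζ + P₁.eval ζ * f ζ)) -
          ∮ ζ in C(0, r), p.eval ζ * P₀.eval ζ := by
        rw [← circleIntegral.integral_sub ((hT.continuousOn.mono hsphere).circleIntegrable hr0)
          ((p.continuous.fun_mul P₀.continuous).continuousOn.circleIntegrable hr0)]
        exact circleIntegral.integral_congr hr0 fun z _ => by ring
    _ = 0 := by rw [hpT, hpP₀, sub_zero]

/-- Orthogonality of the Padé denominator: if `(P₀, P₁)` is a Padé pair of
order `m` for `f`, then `∮_{|ζ|=r} P₁(ζ) p(ζ) f(ζ) dζ = 0` for every polynomial `p` of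
degree at most `m - 1` and every `r > R`. -/
theorem stmt_2
    (R : ℝ) (hR : 0 < R) (f : ℂ → ℂ)
    (hf : DifferentiableOn ℂ f {z : ℂ | R < ‖z‖})
    (hinf : ∃ g : ℂ → ℂ, ∃ ε > (0 : ℝ), DifferentiableOn ℂ g (Metric.ball (0 : ℂ) ε) ∧
      ∀ w ∈ Metric.ball (0 : ℂ) ε, w ≠ 0 → g w = f w⁻¹)
    (m : ℕ) (P₀ P₁ : Polynomial ℂ)
    (hne : ¬(P₀ = 0 ∧ P₁ = 0))
    (hdeg₀ : P₀.natDegree ≤ m) (hdeg₁ : P₁.natDegree ≤ m)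
    (hrem : ∃ C R' : ℝ, ∀ z : ℂ, R' < ‖z‖ →
      ‖z ^ (m + 1) * (P₀.eval z + P₁.eval z * f z)‖ ≤ C) :
    ∀ p : Polynomial ℂ, p.degree < m → ∀ r : ℝ, R < r →
      (∮ ζ in C(0, r), P₁.eval ζ * p.eval ζ * f ζ) = 0 :=
  stmt_2_general R hR f hf m P₀ P₁ hrem
end

section
/- Let f(z) = ∏_{j=1}^{3} (z − a_j)^{α_j} with distinct points a_1, a_2, a_3 ∈ ℂ, exponents α_j ∈ ℂ \ ℤ with α_1 + α_2 + α_3 = 0, where the branch holomorphic in a neighborhood of ∞ with f(∞) = 1 is taken. Let (P_{n,0}, P_{n,1}) be a Padé pair of order n for f (polynomials of degree at most n with T_n := P_{n,0} + P_{n,1} f = O(z^{-n-1}) as z → ∞), and suppose that P_{n,0} and P_{n,1} f are linearly independent over ℂ. Then there exist polynomials Π_1 of degree at most 1, Π_2 of degree at most 2, and Π_3 of degree at most 3, not all zero, such that each of the three functions w = P_{n,0}, w = P_{n,1} f, and w = T_n satisfies the second-order differential equation A_3(z) Π_1(z) w'' + Π_3(z) w' + Π_2(z) w = 0 on the complement of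 {a_1, a_2, a_3} (on each simply connected subdomain, for each branch), where A_3(z) = ∏_{j=1}^{3} (z − a_j). -/
/-!
For a solution `g` of `A g' = B g` (here `A = ∏ (z - aⱼ)` and `B/A = ∑ αⱼ / (z - aⱼ)`) and
`w = p + q g` with polynomial `p, q`, the functions `A w'` and `A² w''` have the same shape, with
coefficient vectors `v₁, v₂ ∈ ℂ[X]²` computed from `v₀ = (p, q)`. For `v₀ = (P₀, P₁)` the 2×2
minors of `v₀, v₁, v₂` give a polynomial relation between `v₂, v₁, v₀`; it holds separately in the
`1`- and `g`-components, so it is a second-order equation solved by `P₀`, `P₁ g` and `P₀ + P₁ g`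
for every branch `g`.

Multiplied by `f`, each minor becomes a Wronskian-type expression in `P₀ = O(zⁿ)` and the remainder
`T = P₀ + P₁ f = O(z^{-n-1})`. By Cauchy's estimates each derivative gains a factor `z⁻¹` at
infinity, which caps the degrees of the coefficients at `1, 2, 3`. Finally, if the coefficient of
`w''` vanished, the Wronskian of `P₀` and `P₁ f` would vanish on the connected set `{R < ‖z‖}`,
making them linearly dependent.
-/

open Polynomial Filter Asymptotics Bornology Topology Metric

theorem zpow_le_two_pow_natAbs_mul_zpow {x y : ℝ} (hy : 0 < y) (hxy : y / 2 ≤ x)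
    (hyx : x ≤ 2 * y) (k : ℤ) : x ^ k ≤ 2 ^ k.natAbs * y ^ k := by
  have hx : 0 < x := by linarith
  rcases Int.eq_nat_or_neg k with ⟨m, rfl | rfl⟩
  · simp only [zpow_natCast, Int.natAbs_natCast, ← mul_pow]
    exact pow_le_pow_left₀ hx.le hyx m
  · simp only [zpow_neg, zpow_natCast, Int.natAbs_neg, Int.natAbs_natCast]
    calc (x ^ m)⁻¹ ≤ ((y / 2) ^ m)⁻¹ :=
          inv_anti₀ (by positivity) (pow_le_pow_left₀ (by positivity) hxy m)
      _ = 2 ^ m * (y ^ m)⁻¹ := by rw [div_pow, inv_div, div_eq_mul_inv]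

theorem isBigO_deriv_zpow {F : ℂ → ℂ} {k : ℤ}
    (hF : ∀ᶠ z in cobounded ℂ, DifferentiableAt ℂ F z) (hO : F =O[cobounded ℂ] (· ^ k)) :
    deriv F =O[cobounded ℂ] (· ^ (k - 1)) := by
  -- Cauchy's estimate on the circle of radius `‖z‖ / 2` around `z`
  obtain ⟨C, hC, hCF⟩ := hO.exists_pos
  obtain ⟨r, -, hr⟩ := hasBasis_cobounded_norm.eventually_iff.mp (hF.and hCF.bound)
  refine IsBigO.of_bound (2 * 2 ^ k.natAbs * C) ?_
  filter_upwards [eventually_cobounded_le_norm (2 * max r 1)] with z hz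
  have hz0 : 0 < ‖z‖ := by linarith [le_max_right r 1]
  have hball : ∀ w ∈ closedBall z (‖z‖ / 2), r ≤ ‖w‖ ∧ ‖z‖ / 2 ≤ ‖w‖ ∧ ‖w‖ ≤ 2 * ‖z‖ := by
    intro w hw
    rw [mem_closedBall, dist_eq_norm] at hw
    have h₁ := norm_sub_norm_le z w
    have h₂ := norm_sub_norm_le w z
    rw [norm_sub_rev] at h₁
    refine ⟨?_, ?_, ?_⟩ <;> linarith [le_max_left r 1]
  have hd : DiffContOnCl ℂ F (ball z (‖z‖ / 2)) := by
    refine DifferentiableOn.diffContOnCl ?_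
    rw [closure_ball _ (by positivity)]
    exact fun w hw => (hr (hball w hw).1).1.differentiableWithinAt
  have hsphere : ∀ w ∈ sphere z (‖z‖ / 2), ‖F w‖ ≤ C * (2 ^ k.natAbs * ‖z‖ ^ k) := by
    intro w hw
    obtain ⟨hrw, hlow, hup⟩ := hball w (sphere_subset_closedBall hw)
    calc ‖F w‖ ≤ C * ‖w‖ ^ k := by simpa [norm_zpow] using (hr hrw).2
      _ ≤ C * (2 ^ k.natAbs * ‖z‖ ^ k) := by
        gcongr; exact zpow_le_two_pow_natAbs_mul_zpow hz0 hlow hup k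
  calc ‖deriv F z‖ ≤ C * (2 ^ k.natAbs * ‖z‖ ^ k) / (‖z‖ / 2) :=
        Complex.norm_deriv_le_of_forall_mem_sphere_norm_le (by positivity) hd hsphere
    _ = 2 * 2 ^ k.natAbs * C * ‖z ^ (k - 1)‖ := by
        rw [norm_zpow, zpow_sub_one₀ hz0.ne']
        field_simp

theorem Polynomial.natDegree_le_of_isBigO_cobounded {𝕜 : Type*} [NontriviallyNormedField 𝕜]
    {p : 𝕜[X]} {m : ℕ} (h : (fun z => p.eval z) =O[cobounded 𝕜] (· ^ m)) :
    p.natDegree ≤ m := by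
  by_contra! hlt
  have hp : p.leadingCoeff ≠ 0 := leadingCoeff_ne_zero.mpr (by rintro rfl; simp at hlt)
  have hlead : (fun z => p.leadingCoeff * z ^ p.natDegree) =o[cobounded 𝕜] (· ^ p.natDegree) :=
    (isEquivalent_cobounded_leading_monomial.symm.isBigO.trans h).trans_isLittleO
      (isLittleO_pow_pow_cobounded_of_lt hlt)
  refine isLittleO_irrefl ?_ ((hlead.const_mul_left p.leadingCoeff⁻¹).congr_left fun z => ?_)
  · exact ((eventually_cobounded_le_norm 1).mono fun z hz =>
      pow_ne_zero _ (norm_pos_iff.mp (by linarith))).frequently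
  · simp [inv_mul_cancel_left₀ hp]

theorem Polynomial.isBigO_cobounded_zpow {𝕜 : Type*} [NormedField 𝕜] {p : 𝕜[X]} {n : ℕ}
    (hp : p.natDegree ≤ n) : (fun z => p.eval z) =O[cobounded 𝕜] (· ^ (n : ℤ)) := by
  have hdeg : p.degree ≤ (X ^ n : 𝕜[X]).degree := by
    nontriviality 𝕜
    rw [degree_X_pow]; exact degree_le_of_natDegree_le hp
  simpa using isBigO_cobounded_of_degree_le hdeg

theorem Asymptotics.IsBigO.mul_zpow {𝕜 : Type*} [NormedField 𝕜] {F G : 𝕜 → 𝕜} {a b : ℤ}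
    (hF : F =O[cobounded 𝕜] (· ^ a)) (hG : G =O[cobounded 𝕜] (· ^ b)) {c : ℤ} (h : a + b = c) :
    (fun z => F z * G z) =O[cobounded 𝕜] (· ^ c) := by
  refine (hF.mul hG).congr' .rfl ?_
  filter_upwards [eventually_cobounded_le_norm 1] with z hz
  rw [← h, zpow_add₀ (norm_pos_iff.mp (by linarith))]

theorem isBigO_zpow_neg_of_norm_pow_mul_le {𝕜 : Type*} [NormedField 𝕜] {F : 𝕜 → 𝕜} {k : ℕ}
    {C R : ℝ} (h : ∀ z : 𝕜, R < ‖z‖ → ‖z ^ k * F z‖ ≤ C) :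
    F =O[cobounded 𝕜] (· ^ (-(k : ℤ))) := by
  refine IsBigO.of_bound C ?_
  filter_upwards [eventually_cobounded_le_norm (max R 0 + 1)] with z hz
  have hz0 : 0 < ‖z‖ := by linarith [le_max_right R 0]
  have hzk := h z (by linarith [le_max_left R 0])
  rw [norm_mul, norm_pow] at hzk
  rw [norm_zpow, zpow_neg, zpow_natCast, ← div_eq_mul_inv, le_div_iff₀ (by positivity)]
  linarith

theorem Polynomial.natDegree_le_of_mul_isBigO {𝕜 : Type*} [NontriviallyNormedField 𝕜]
    {S : 𝕜[X]} {f h : 𝕜 → 𝕜} {m : ℕ} (hf : Tendsto f (cobounded 𝕜) (𝓝 1))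
    (hS : ∀ᶠ z in cobounded 𝕜, S.eval z * f z = h z) (hh : h =O[cobounded 𝕜] (· ^ (m : ℤ))) :
    S.natDegree ≤ m := by
  refine natDegree_le_of_isBigO_cobounded
    ((hh.mul ((hf.inv₀ one_ne_zero).isBigO_one 𝕜)).congr' ?_ ?_)
  · filter_upwards [hS, hf.eventually_ne one_ne_zero] with z hz hfz
    rw [← hz, mul_inv_cancel_right₀ hfz]
  · exact .of_forall fun z => by simp

theorem isPreconnected_setOf_lt_norm {R : ℝ} (hR : 0 < R) : IsPreconnected {z : ℂ | R < ‖z‖} := by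
  have himage : {z : ℂ | R < ‖z‖} = Complex.exp '' {w | Real.log R < w.re} := by
    ext z
    constructor
    · intro hz
      have hz0 : z ≠ 0 := norm_pos_iff.mp (hR.trans hz)
      refine ⟨Complex.log z, ?_, Complex.exp_log hz0⟩
      simpa [Complex.log_re] using Real.log_lt_log hR hz
    · rintro ⟨w, hw, rfl⟩
      simpa [Complex.norm_exp] using (Real.log_lt_iff_lt_exp hR).mp hw
  rw [himage]
  exact (convex_halfSpace_re_gt _).isPreconnected.image _ Complex.continuous_exp.continuousOn

theorem exists_linear_dependence_of_wronskian_eq_zero {U : Set ℂ} (hU : IsOpen U)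
    (hUc : IsPreconnected U) {u v : ℂ → ℂ} (hu : DifferentiableOn ℂ u U)
    (hv : DifferentiableOn ℂ v U) (hW : ∀ z ∈ U, u z * deriv v z - deriv u z * v z = 0) :
    ∃ c₀ c₁ : ℂ, ¬(c₀ = 0 ∧ c₁ = 0) ∧ ∀ z ∈ U, c₀ * u z + c₁ * v z = 0 := by
  by_cases hu0 : ∀ z ∈ U, u z = 0
  · exact ⟨1, 0, by simp, fun z hz => by simp [hu0 z hz]⟩
  push Not at hu0
  obtain ⟨z₀, hz₀, huz₀⟩ := hu0
  obtain ⟨ε, hε, hball⟩ : ∃ ε > 0, ball z₀ ε ⊆ U ∩ {z | u z ≠ 0} :=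
    Metric.mem_nhds_iff.mp <| inter_mem (hU.mem_nhds hz₀)
      ((hu.continuousOn.continuousAt (hU.mem_nhds hz₀)).eventually_ne huz₀)
  have hdiff : ∀ z ∈ ball z₀ ε, DifferentiableAt ℂ u z ∧ DifferentiableAt ℂ v z := fun z hz =>
    have hzU := hU.mem_nhds (hball hz).1
    ⟨hu.differentiableAt hzU, hv.differentiableAt hzU⟩
  -- on the ball, `v / u` has derivative `-W(u, v) / u² = 0`
  have hquot : ∀ z ∈ ball z₀ ε, v z / u z = v z₀ / u z₀ := by
    refine fun z hz => isOpen_ball.is_const_of_deriv_eq_zero isPreconnected_ball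
      (fun y hy => ((hdiff y hy).2.div (hdiff y hy).1 (hball hy).2).differentiableWithinAt)
      (fun y hy => ?_) hz (mem_ball_self hε)
    rw [deriv_div (hdiff y hy).2 (hdiff y hy).1 (hball hy).2, Pi.zero_apply,
      show deriv v y * u y - v y * deriv u y = 0 by linear_combination hW y (hball hy).1,
      zero_div]
  refine ⟨-(v z₀ / u z₀), 1, by simp, fun z hz => ?_⟩
  have han : AnalyticOnNhd ℂ (fun z => -(v z₀ / u z₀) * u z + 1 * v z) U :=
    ((hu.const_mul _).add (hv.const_mul 1)).analyticOnNhd hU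
  refine han.eqOn_zero_of_preconnected_of_eventuallyEq_zero hUc hz₀ ?_ hz
  filter_upwards [ball_mem_nhds z₀ hε] with y hy
  have hy0 : u y ≠ 0 := (hball hy).2
  rw [Pi.zero_apply, ← hquot y hy]
  field_simp
  ring

namespace Laguerre

/-- `A² (φ' + φ²)` for `φ = B / A`, so that `A² g'' = secondCoeff A B * g` whenever `A g' = B g`. -/
noncomputable def secondCoeff (A B : ℂ[X]) : ℂ[X] := A * derivative B - derivative A * B + B ^ 2

/-- Write `A w' = p₁ + q₁ g` and `A² w'' = p₂ + q₂ g` for `w = P + Q g`, and `vᵢ = (pᵢ, qᵢ)`,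
`v₀ = (P, Q)`. Then `coeff₁`, `A * coeff₂`, `coeff₃` are the minors `det(v₀, v₁)`, `det(v₁, v₂)`,
`det(v₂, v₀)` in Cramer's relation `det(v₀, v₁) v₂ + det(v₂, v₀) v₁ + det(v₁, v₂) v₀ = 0`. -/
noncomputable def coeff₁ (A B P Q : ℂ[X]) : ℂ[X] :=
  A * (P * derivative Q - derivative P * Q) + B * P * Q

noncomputable def coeff₂ (A B P Q : ℂ[X]) : ℂ[X] :=
  A ^ 2 * (derivative P * derivative (derivative Q) - derivative (derivative P) * derivative Q)
    + 2 * A * B * derivative P * derivative Q + secondCoeff A B * derivative P * Q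
    - A * B * derivative (derivative P) * Q

noncomputable def coeff₃ (A B P Q : ℂ[X]) : ℂ[X] :=
  -(A ^ 2 * (P * derivative (derivative Q) - derivative (derivative P) * Q)
    + 2 * A * B * P * derivative Q + secondCoeff A B * P * Q)

theorem coeff_annihilate_left (A B P Q : ℂ[X]) :
    coeff₁ A B P Q * (A ^ 2 * derivative (derivative P)) + coeff₃ A B P Q * (A * derivative P)
      + coeff₂ A B P Q * (A * P) = 0 := by
  simp only [coeff₁, coeff₂, coeff₃]
  ring

theorem coeff_annihilate_right (A B P Q : ℂ[X]) :
    coeff₁ A B P Q * (A ^ 2 * derivative (derivative Q) + 2 * A * B * derivative Q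
        + secondCoeff A B * Q)
      + coeff₃ A B P Q * (A * derivative Q + B * Q) + coeff₂ A B P Q * (A * Q) = 0 := by
  simp only [coeff₁, coeff₂, coeff₃]
  ring

structure IsSolutionOn (A B : ℂ[X]) (g : ℂ → ℂ) (V : Set ℂ) : Prop where
  isOpen : IsOpen V
  eval_ne_zero : ∀ z ∈ V, A.eval z ≠ 0
  differentiableOn : DifferentiableOn ℂ g V
  mul_deriv_eq : ∀ z ∈ V, A.eval z * deriv g z = B.eval z * g z

section Solution

variable {A B : ℂ[X]} {g : ℂ → ℂ} {V : Set ℂ}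

theorem IsSolutionOn.hasDerivAt (hg : IsSolutionOn A B g V) {z : ℂ} (hz : z ∈ V) :
    HasDerivAt g (B.eval z / A.eval z * g z) z := by
  have hd : deriv g z = B.eval z / A.eval z * g z := by
    rw [div_mul_eq_mul_div, eq_div_iff (hg.eval_ne_zero z hz), mul_comm, hg.mul_deriv_eq z hz]
  exact hd ▸ (hg.differentiableOn.differentiableAt (hg.isOpen.mem_nhds hz)).hasDerivAt

theorem IsSolutionOn.hasDerivAt_eval_add_eval_mul (hg : IsSolutionOn A B g V) (P Q : ℂ[X])
    {z : ℂ} (hz : z ∈ V) :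
    HasDerivAt (fun y => P.eval y + Q.eval y * g y)
      ((derivative P).eval z + ((derivative Q).eval z + Q.eval z * (B.eval z / A.eval z)) * g z)
      z :=
  ((P.hasDerivAt z).add ((Q.hasDerivAt z).mul (hg.hasDerivAt hz))).congr_deriv (by ring)

theorem IsSolutionOn.mul_deriv_eval_add_eval_mul (hg : IsSolutionOn A B g V) (P Q : ℂ[X])
    {z : ℂ} (hz : z ∈ V) :
    A.eval z * deriv (fun y => P.eval y + Q.eval y * g y) z
      = (A * derivative P).eval z + (A * derivative Q + B * Q).eval z * g z := by
  rw [(hg.hasDerivAt_eval_add_eval_mul P Q hz).deriv]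
  have := hg.eval_ne_zero z hz
  simp only [eval_add, eval_mul]
  field_simp

theorem IsSolutionOn.sq_mul_iteratedDeriv_two_eval_add_eval_mul (hg : IsSolutionOn A B g V)
    (P Q : ℂ[X]) {z : ℂ} (hz : z ∈ V) :
    A.eval z ^ 2 * iteratedDeriv 2 (fun y => P.eval y + Q.eval y * g y) z
      = (A ^ 2 * derivative (derivative P)).eval z
        + (A ^ 2 * derivative (derivative Q) + 2 * A * B * derivative Q
          + secondCoeff A B * Q).eval z * g z := by
  have hderiv : deriv (fun y => P.eval y + Q.eval y * g y) =ᶠ[𝓝 z] fun y =>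
      (derivative P).eval y + ((derivative Q).eval y + Q.eval y * (B.eval y / A.eval y)) * g y := by
    filter_upwards [hg.isOpen.mem_nhds hz] with y hy
    exact (hg.hasDerivAt_eval_add_eval_mul P Q hy).deriv
  have hφ := (B.hasDerivAt z).div (A.hasDerivAt z) (hg.eval_ne_zero z hz)
  have hsecond : deriv (fun y => (derivative P).eval y
      + ((derivative Q).eval y + Q.eval y * (B.eval y / A.eval y)) * g y) z = _ :=
    HasDerivAt.deriv <| (P.derivative.hasDerivAt z).add (((Q.derivative.hasDerivAt z).add
      ((Q.hasDerivAt z).mul hφ)).mul (hg.hasDerivAt hz))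
  rw [iteratedDeriv_succ, iteratedDeriv_one, hderiv.deriv_eq, hsecond]
  have := hg.eval_ne_zero z hz
  simp only [secondCoeff, Pi.add_apply, Pi.mul_apply, Pi.div_apply, eval_add, eval_mul, eval_sub,
    eval_pow, eval_ofNat]
  field_simp
  ring

theorem IsSolutionOn.ode_of_annihilate (hg : IsSolutionOn A B g V) {P Q S₁ S₂ S₃ : ℂ[X]}
    (hP : S₁ * (A ^ 2 * derivative (derivative P)) + S₃ * (A * derivative P) + S₂ * (A * P) = 0)
    (hQ : S₁ * (A ^ 2 * derivative (derivative Q) + 2 * A * B * derivative Q + secondCoeff A B * Q)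
      + S₃ * (A * derivative Q + B * Q) + S₂ * (A * Q) = 0)
    {z : ℂ} (hz : z ∈ V) :
    A.eval z * S₁.eval z * iteratedDeriv 2 (fun y => P.eval y + Q.eval y * g y) z
      + S₃.eval z * deriv (fun y => P.eval y + Q.eval y * g y) z
      + S₂.eval z * (P.eval z + Q.eval z * g z) = 0 := by
  have e₁ := hg.mul_deriv_eval_add_eval_mul P Q hz
  have e₂ := hg.sq_mul_iteratedDeriv_two_eval_add_eval_mul P Q hz
  have hPz := congrArg (eval z) hP
  have hQz := congrArg (eval z) hQ
  simp only [eval_add, eval_mul, eval_pow, eval_ofNat, eval_zero] at e₁ e₂ hPz hQz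
  refine mul_left_cancel₀ (hg.eval_ne_zero z hz) ?_
  linear_combination S₁.eval z * e₂ + S₃.eval z * e₁ + hPz + g z * hQz

theorem IsSolutionOn.coeff₁_mul_eq (hg : IsSolutionOn A B g V) (P Q : ℂ[X]) {z : ℂ}
    (hz : z ∈ V) :
    (coeff₁ A B P Q).eval z * g z
      = A.eval z * (P.eval z * deriv (fun y => P.eval y + Q.eval y * g y) z
        - (derivative P).eval z * (P.eval z + Q.eval z * g z)) := by
  have e₁ := hg.mul_deriv_eval_add_eval_mul P Q hz
  simp only [coeff₁, eval_add, eval_mul, eval_sub] at e₁ ⊢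
  linear_combination -P.eval z * e₁

theorem IsSolutionOn.coeff₂_mul_eq (hg : IsSolutionOn A B g V) (P Q : ℂ[X]) {z : ℂ}
    (hz : z ∈ V) :
    (coeff₂ A B P Q).eval z * g z
      = A.eval z ^ 2 *
        ((derivative P).eval z * iteratedDeriv 2 (fun y => P.eval y + Q.eval y * g y) z
          - (derivative (derivative P)).eval z * deriv (fun y => P.eval y + Q.eval y * g y) z) := by
  have e₁ := hg.mul_deriv_eval_add_eval_mul P Q hz
  have e₂ := hg.sq_mul_iteratedDeriv_two_eval_add_eval_mul P Q hz
  simp only [coeff₂, eval_add, eval_mul, eval_sub, eval_pow, eval_ofNat] at e₁ e₂ ⊢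
  linear_combination -(derivative P).eval z * e₂
    + A.eval z * (derivative (derivative P)).eval z * e₁

theorem IsSolutionOn.coeff₃_mul_eq (hg : IsSolutionOn A B g V) (P Q : ℂ[X]) {z : ℂ}
    (hz : z ∈ V) :
    (coeff₃ A B P Q).eval z * g z
      = -(A.eval z ^ 2 * (P.eval z * iteratedDeriv 2 (fun y => P.eval y + Q.eval y * g y) z
        - (derivative (derivative P)).eval z * (P.eval z + Q.eval z * g z))) := by
  have e₂ := hg.sq_mul_iteratedDeriv_two_eval_add_eval_mul P Q hz
  simp only [coeff₃, eval_add, eval_mul, eval_sub, eval_neg, eval_pow, eval_ofNat] at e₂ ⊢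
  linear_combination P.eval z * e₂

theorem IsSolutionOn.natDegree_coeff_le (hg : IsSolutionOn A B g V) (hV : V ∈ cobounded ℂ)
    (hg₁ : Tendsto g (cobounded ℂ) (𝓝 1)) {P Q : ℂ[X]} {m n : ℕ} (hA : A.natDegree ≤ m + 2)
    (hP : P.natDegree ≤ n)
    (hw : (fun z => P.eval z + Q.eval z * g z) =O[cobounded ℂ] (· ^ (-((n + 1 : ℕ) : ℤ)))) :
    (coeff₁ A B P Q).natDegree ≤ m ∧ (coeff₂ A B P Q).natDegree ≤ 2 * m ∧
      (coeff₃ A B P Q).natDegree ≤ 2 * m + 1 := by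
  set w := fun z => P.eval z + Q.eval z * g z
  have hwan : AnalyticOnNhd ℂ w V :=
    (P.differentiableOn.add (Q.differentiableOn.mul hg.differentiableOn)).analyticOnNhd hg.isOpen
  have hw₁ := isBigO_deriv_zpow (Eventually.mono hV fun z hz => (hwan z hz).differentiableAt) hw
  have hw₂ : iteratedDeriv 2 w =O[cobounded ℂ] (· ^ (-((n + 1 : ℕ) : ℤ) - 1 - 1)) := by
    rw [iteratedDeriv_succ, iteratedDeriv_one]
    exact isBigO_deriv_zpow (Eventually.mono hV fun z hz => (hwan.deriv z hz).differentiableAt) hw₁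
  have hderiv : ∀ p : ℂ[X], deriv (fun z => p.eval z) = fun z => (derivative p).eval z :=
    fun p => funext fun z => p.deriv
  have hP₀ := isBigO_cobounded_zpow hP
  have hP₁ := hderiv P ▸ isBigO_deriv_zpow (.of_forall fun z => P.differentiableAt) hP₀
  have hP₂ := hderiv _ ▸ isBigO_deriv_zpow (.of_forall fun z => P.derivative.differentiableAt) hP₁
  have hA₁ := isBigO_cobounded_zpow hA
  have hA₂ : (fun z => A.eval z ^ 2) =O[cobounded ℂ] (· ^ ((2 * (m + 2) : ℕ) : ℤ)) := by
    simpa using isBigO_cobounded_zpow (natDegree_pow_le_of_le 2 hA)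
  refine ⟨?_, ?_, ?_⟩
  · refine natDegree_le_of_mul_isBigO hg₁ (Eventually.mono hV fun z hz => hg.coeff₁_mul_eq P Q hz)
      (hA₁.mul_zpow ((hP₀.mul_zpow hw₁ (c := -2) (by push_cast; ring)).sub
        (hP₁.mul_zpow hw (by push_cast; ring))) (by push_cast; ring))
  · refine natDegree_le_of_mul_isBigO hg₁ (Eventually.mono hV fun z hz => hg.coeff₂_mul_eq P Q hz)
      (hA₂.mul_zpow ((hP₁.mul_zpow hw₂ (c := -4) (by push_cast; ring)).sub
        (hP₂.mul_zpow hw₁ (by push_cast; ring))) (by push_cast; ring))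
  · refine natDegree_le_of_mul_isBigO hg₁ (Eventually.mono hV fun z hz => hg.coeff₃_mul_eq P Q hz)
      (hA₂.mul_zpow ((hP₀.mul_zpow hw₂ (c := -3) (by push_cast; ring)).sub
        (hP₂.mul_zpow hw (by push_cast; ring))) (by push_cast; ring)).neg_left

theorem IsSolutionOn.coeff₁_ne_zero (hg : IsSolutionOn A B g V) (hV : IsPreconnected V)
    {P Q : ℂ[X]} (hind : ∀ c₀ c₁ : ℂ,
      (∀ z ∈ V, c₀ * P.eval z + c₁ * (Q.eval z * g z) = 0) → c₀ = 0 ∧ c₁ = 0) :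
    coeff₁ A B P Q ≠ 0 := by
  intro h₀
  have hW : ∀ z ∈ V, P.eval z * deriv (fun y => P.eval y + Q.eval y * g y) z
      - deriv (fun y => P.eval y) z * (P.eval z + Q.eval z * g z) = 0 := by
    intro z hz
    have h := hg.coeff₁_mul_eq P Q hz
    rw [h₀, eval_zero, zero_mul, eq_comm, mul_eq_zero] at h
    rw [Polynomial.deriv]
    exact h.resolve_left (hg.eval_ne_zero z hz)
  obtain ⟨c₀, c₁, hc, hdep⟩ := exists_linear_dependence_of_wronskian_eq_zero hg.isOpen hV
    (v := fun y => P.eval y + Q.eval y * g y) P.differentiableOn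
    (P.differentiableOn.add (Q.differentiableOn.mul hg.differentiableOn)) hW
  obtain ⟨h₀, h₁⟩ := hind (c₀ + c₁) c₁ fun z hz => by linear_combination hdep z hz
  exact hc ⟨by linear_combination h₀ - h₁, h₁⟩

end Solution

end Laguerre

open Laguerre in
theorem stmt_9_general
    (a : Fin 3 → ℂ)
    (α : Fin 3 → ℂ)
    (R : ℝ) (hR : ∀ j, ‖a j‖ < R)
    (f : ℂ → ℂ)
    (hf : DifferentiableOn ℂ f {z : ℂ | R < ‖z‖})
    (hf1 : Filter.Tendsto f (Bornology.cobounded ℂ) (nhds 1))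
    (hbranch : ∀ z : ℂ, R < ‖z‖ →
      (∏ j, (z - a j)) * deriv f z
        = (∑ j, α j * ∏ k ∈ Finset.univ.erase j, (z - a k)) * f z)
    (n : ℕ) (P₀ P₁ : Polynomial ℂ)
    (hdeg₀ : P₀.natDegree ≤ n)
    (hrem : ∃ C R' : ℝ, ∀ z : ℂ, R' < ‖z‖ →
      ‖z ^ (n + 1) * (P₀.eval z + P₁.eval z * f z)‖ ≤ C)
    (hind : ∀ c₀ c₁ : ℂ,
      (∀ z : ℂ, R < ‖z‖ → c₀ * P₀.eval z + c₁ * (P₁.eval z * f z) = 0) →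
      c₀ = 0 ∧ c₁ = 0) :
    ∃ Pi1 Pi2 Pi3 : Polynomial ℂ,
      Pi1.natDegree ≤ 1 ∧ Pi2.natDegree ≤ 2 ∧ Pi3.natDegree ≤ 3 ∧
      ¬(Pi1 = 0 ∧ Pi2 = 0 ∧ Pi3 = 0) ∧
      ∀ U : Set ℂ, IsOpen U → U ⊆ {z : ℂ | ∀ j, z ≠ a j} →
        ∀ g : ℂ → ℂ, DifferentiableOn ℂ g U →
          (∀ z ∈ U, (∏ j, (z - a j)) * deriv g z
              = (∑ j, α j * ∏ k ∈ Finset.univ.erase j, (z - a k)) * g z) →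
          ∀ w : ℂ → ℂ,
            (w = fun z => P₀.eval z) ∨ (w = fun z => P₁.eval z * g z) ∨
              (w = fun z => P₀.eval z + P₁.eval z * g z) →
            ∀ z ∈ U,
              (∏ j, (z - a j)) * Pi1.eval z * iteratedDeriv 2 w z
                + Pi3.eval z * deriv w z + Pi2.eval z * w z = 0 := by
  set A : ℂ[X] := ∏ j, (X - C (a j))
  set B : ℂ[X] := ∑ j, C (α j) * ∏ k ∈ Finset.univ.erase j, (X - C (a k))
  have hAeval : ∀ z, A.eval z = ∏ j, (z - a j) := fun z => by simp [A, eval_prod]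
  have hBeval : ∀ z, B.eval z = ∑ j, α j * ∏ k ∈ Finset.univ.erase j, (z - a k) := fun z => by
    simp [B, eval_finsetSum, eval_prod]
  have hAne : ∀ z, (∀ j, z ≠ a j) → A.eval z ≠ 0 := fun z hz => by
    rw [hAeval]
    exact Finset.prod_ne_zero_iff.mpr fun j _ => sub_ne_zero.mpr (hz j)
  have hAdeg : A.natDegree ≤ 1 + 2 := (natDegree_prod_le _ _).trans (by simp)
  have hf : IsSolutionOn A B f {z : ℂ | R < ‖z‖} :=
    ⟨isOpen_lt continuous_const continuous_norm,
      fun z hz => hAne z fun j hj => (hR j).not_ge (hj ▸ hz.le), hf,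
      fun z hz => by rw [hAeval, hBeval]; exact hbranch z hz⟩
  obtain ⟨C, R', hC⟩ := hrem
  obtain ⟨h₁, h₂, h₃⟩ := hf.natDegree_coeff_le (tendsto_norm_cobounded_atTop.eventually_gt_atTop R)
    hf1 hAdeg hdeg₀ (isBigO_zpow_neg_of_norm_pow_mul_le hC)
  have hR₀ : 0 < R := (norm_nonneg _).trans_lt (hR 0)
  refine ⟨_, _, _, h₁, h₂, h₃,
    fun h => hf.coeff₁_ne_zero (isPreconnected_setOf_lt_norm hR₀) hind h.1, ?_⟩
  intro U hU hUa g hg hgode w hw z hz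
  have hg : IsSolutionOn A B g U := ⟨hU, fun z hz => hAne z (hUa hz), hg,
    fun z hz => by rw [hAeval, hBeval]; exact hgode z hz⟩
  rw [← hAeval]
  rcases hw with rfl | rfl | rfl
  · simpa using hg.ode_of_annihilate (coeff_annihilate_left A B P₀ P₁) (Q := 0) (by simp) hz
  · simpa using hg.ode_of_annihilate (P := 0) (by simp) (coeff_annihilate_right A B P₀ P₁) hz
  · exact hg.ode_of_annihilate (coeff_annihilate_left A B P₀ P₁)
      (coeff_annihilate_right A B P₀ P₁) hz

/-- Laguerre's differential equation. For `f(z) = ∏_{j=1}^3 (z−a_j)^{α_j}`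
(the branch holomorphic near `∞` with `f(∞) = 1`, characterized here by the first-order
equation `A₃ f' = B f` with `B(z) = ∑_j α_j ∏_{k≠j}(z − a_k)` together with
`f(z) → 1` as `z → ∞`), a Padé pair `(P₀, P₁)` of order `n` with `P₀` and `P₁ f` linearly
independent gives rise to polynomials `Pi1, Pi2, Pi3` of degrees `≤ 1, 2, 3`, not all zero,
such that each of `w = P₀`, `w = P₁ g`, `w = P₀ + P₁ g` satisfies
`A₃ Pi1 w'' + Pi3 w' + Pi2 w = 0` on every open subset of `ℂ \ {a₁,a₂,a₃}`, for every branch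
`g` of `f` there (branches being the solutions of `A₃ g' = B g`). -/
theorem stmt_9
    (a : Fin 3 → ℂ) (ha : Function.Injective a)
    (α : Fin 3 → ℂ) (hα : ∀ j, ∀ m : ℤ, α j ≠ (m : ℂ)) (hsum : ∑ j, α j = 0)
    (R : ℝ) (hR : ∀ j, ‖a j‖ < R)
    (f : ℂ → ℂ)
    (hf : DifferentiableOn ℂ f {z : ℂ | R < ‖z‖})
    (hf1 : Filter.Tendsto f (Bornology.cobounded ℂ) (nhds 1))
    (hbranch : ∀ z : ℂ, R < ‖z‖ →
      (∏ j, (z - a j)) * deriv f z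
        = (∑ j, α j * ∏ k ∈ Finset.univ.erase j, (z - a k)) * f z)
    (n : ℕ) (P₀ P₁ : Polynomial ℂ)
    (hne : ¬(P₀ = 0 ∧ P₁ = 0))
    (hdeg₀ : P₀.natDegree ≤ n) (hdeg₁ : P₁.natDegree ≤ n)
    (hrem : ∃ C R' : ℝ, ∀ z : ℂ, R' < ‖z‖ →
      ‖z ^ (n + 1) * (P₀.eval z + P₁.eval z * f z)‖ ≤ C)
    (hind : ∀ c₀ c₁ : ℂ,
      (∀ z : ℂ, R < ‖z‖ → c₀ * P₀.eval z + c₁ * (P₁.eval z * f z) = 0) →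
      c₀ = 0 ∧ c₁ = 0) :
    ∃ Pi1 Pi2 Pi3 : Polynomial ℂ,
      Pi1.natDegree ≤ 1 ∧ Pi2.natDegree ≤ 2 ∧ Pi3.natDegree ≤ 3 ∧
      ¬(Pi1 = 0 ∧ Pi2 = 0 ∧ Pi3 = 0) ∧
      ∀ U : Set ℂ, IsOpen U → U ⊆ {z : ℂ | ∀ j, z ≠ a j} →
        ∀ g : ℂ → ℂ, DifferentiableOn ℂ g U →
          (∀ z ∈ U, (∏ j, (z - a j)) * deriv g z
              = (∑ j, α j * ∏ k ∈ Finset.univ.erase j, (z - a k)) * g z) →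
          ∀ w : ℂ → ℂ,
            (w = fun z => P₀.eval z) ∨ (w = fun z => P₁.eval z * g z) ∨
              (w = fun z => P₀.eval z + P₁.eval z * g z) →
            ∀ z ∈ U,
              (∏ j, (z - a j)) * Pi1.eval z * iteratedDeriv 2 w z
                + Pi3.eval z * deriv w z + Pi2.eval z * w z = 0 :=
  stmt_9_general a α R hR f hf hf1 hbranch n P₀ P₁ hdeg₀ hrem hind
end

section
/- For every z ∈ ℂ \ [−1, 1], ∫_{−1}^{1} √(1 − x^2) / (z − x) dx = π (z − √(z^2 − 1)), where √(z^2 − 1) denotes the branch holomorphic on ℂ \ [−1, 1] satisfying √(z^2 − 1)/z → 1 as z → ∞. -/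
/-!
Write `w = s z` and `δ = z - w`, so that `δ (z + w) = 1` and `z = (δ + δ⁻¹) / 2`.

First, `‖δ‖ < 1`. If `‖δ‖ = 1` then `z + w = δ̄` and `z = re δ ∈ [-1, 1]`, so `‖t z - s (t z)‖`
never takes the value `1` along the ray `t ≥ 1`; it is continuous there and tends to `0`, because
`s (t z) ~ t z`, hence it stays below `1`.

Second, since `1 - x² = (z - x)(z + x) - w²`, the integrand is
`((z + x) - w² / (z - x)) / √(1 - x²)`, which has the primitive
`z arcsin x - √(1 - x²) - i w log p(x)` with `p(x) = -i ζ̄ (δ - ζ) / (δ - ζ̄)`,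
`ζ = x + i √(1 - x²)`. As `|δ| < 1`, `re p > 0` on `(-1, 1)`, so the principal logarithm is
smooth there, and `p(±1) = ∓i` gives the value `π (z - w)`.
-/

open Complex ComplexConjugate Set Filter Topology intervalIntegral

lemma norm_sub_ne_one_of_sq_eq_sq_sub_one {z w : ℂ} (hz : ¬(z.im = 0 ∧ -1 ≤ z.re ∧ z.re ≤ 1))
    (hw : w ^ 2 = z ^ 2 - 1) : ‖z - w‖ ≠ 1 := by
  set a := z - w
  intro ha
  have hmul : a * (z + w) = a * conj a := by
    rw [mul_conj, normSq_eq_norm_sq, ha]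
    push_cast
    linear_combination -hw
  have ha0 : a ≠ 0 := norm_ne_zero_iff.mp (by rw [ha]; exact one_ne_zero)
  have hza : z = a.re := by
    have h := mul_left_cancel₀ ha0 hmul
    apply Complex.ext <;> simp only [ofReal_re, ofReal_im]
    · have := congrArg re h; simp only [add_re, conj_re, a, sub_re] at this ⊢; linarith
    · have := congrArg im h; simp only [add_im, conj_im, a, sub_im] at this ⊢; linarith
  have hre := abs_le.mp (ha ▸ abs_re_le_norm a)
  exact hz ⟨by rw [hza, ofReal_im], by rw [hza, ofReal_re]; exact hre.1,
    by rw [hza, ofReal_re]; exact hre.2⟩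

lemma tendsto_sub_cobounded_nhds_zero {s : ℂ → ℂ}
    (hsq : ∀ᶠ z in Bornology.cobounded ℂ, s z ^ 2 = z ^ 2 - 1)
    (hsinf : Tendsto (fun z => s z / z) (Bornology.cobounded ℂ) (𝓝 1)) :
    Tendsto (fun z => z - s z) (Bornology.cobounded ℂ) (𝓝 0) := by
  have hsum : Tendsto (fun z => z * (1 + s z / z)) (Bornology.cobounded ℂ)
      (Bornology.cobounded ℂ) := by
    rw [← tendsto_norm_atTop_iff_cobounded]
    simp only [norm_mul]
    refine tendsto_norm_cobounded_atTop.atTop_mul_pos (by norm_num : (0 : ℝ) < ‖(1 + 1 : ℂ)‖) ?_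
    exact (tendsto_const_nhds.add hsinf).norm
  refine (tendsto_inv₀_cobounded.comp hsum).congr' ?_
  filter_upwards [hsq, tendsto_norm_cobounded_atTop.eventually_gt_atTop 0] with z hz hz0
  have hz0 : z ≠ 0 := norm_pos_iff.mp hz0
  rw [Function.comp_apply, mul_add, mul_one, mul_div_cancel₀ _ hz0]
  refine inv_eq_of_mul_eq_one_right ?_
  linear_combination -hz

lemma lt_of_continuousOn_Ici_of_ne {α : Type*} [LinearOrder α] [TopologicalSpace α]
    [OrderClosedTopology α] {f : ℝ → α} {a : ℝ} {c : α} (hf : ContinuousOn f (Ici a))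
    (hne : ∀ t ∈ Ici a, f t ≠ c) (hlim : ∀ᶠ t in atTop, f t < c) : f a < c := by
  obtain ⟨T, hTc, hTa⟩ := (hlim.and (eventually_ge_atTop a)).exists
  by_contra! hc
  obtain ⟨t, ht, hft⟩ := isPreconnected_Ici.intermediate_value hTa self_mem_Ici hf ⟨hTc.le, hc⟩
  exact hne t ht hft

lemma ofReal_mul_off_unitSegment {z : ℂ} (hz : ¬(z.im = 0 ∧ -1 ≤ z.re ∧ z.re ≤ 1)) {t : ℝ}
    (ht : 1 ≤ t) : ¬(((t : ℂ) * z).im = 0 ∧ -1 ≤ ((t : ℂ) * z).re ∧ ((t : ℂ) * z).re ≤ 1) := by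
  rintro ⟨him, hre1, hre2⟩
  simp only [re_ofReal_mul, im_ofReal_mul] at him hre1 hre2
  have him : z.im = 0 := (mul_eq_zero.mp him).resolve_left (by linarith)
  exact hz ⟨him, by nlinarith, by nlinarith⟩

lemma tendsto_ofReal_mul_cobounded {z : ℂ} (hz : z ≠ 0) :
    Tendsto (fun t : ℝ => (t : ℂ) * z) atTop (Bornology.cobounded ℂ) := by
  rw [← tendsto_norm_atTop_iff_cobounded]
  simp only [norm_mul, norm_real, Real.norm_eq_abs]
  exact tendsto_abs_atTop_atTop.atTop_mul_const (norm_pos_iff.mpr hz)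

lemma eventually_cobounded_off_unitSegment :
    ∀ᶠ z in Bornology.cobounded ℂ, ¬(z.im = 0 ∧ -1 ≤ z.re ∧ z.re ≤ 1) := by
  filter_upwards [tendsto_norm_cobounded_atTop.eventually_gt_atTop 1] with z hz
  rintro ⟨him, hre1, hre2⟩
  rw [← re_add_im z, him, ofReal_zero, zero_mul, add_zero, norm_real, Real.norm_eq_abs] at hz
  exact absurd hz (not_lt.mpr (abs_le.mpr ⟨hre1, hre2⟩))

lemma norm_sub_sqrt_branch_lt_one (s : ℂ → ℂ)
    (hs : DifferentiableOn ℂ s {z : ℂ | ¬(z.im = 0 ∧ -1 ≤ z.re ∧ z.re ≤ 1)})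
    (hs2 : ∀ z : ℂ, ¬(z.im = 0 ∧ -1 ≤ z.re ∧ z.re ≤ 1) → (s z) ^ 2 = z ^ 2 - 1)
    (hsinf : Tendsto (fun z => s z / z) (Bornology.cobounded ℂ) (𝓝 1))
    {z : ℂ} (hz : ¬(z.im = 0 ∧ -1 ≤ z.re ∧ z.re ≤ 1)) : ‖z - s z‖ < 1 := by
  have hz0 : z ≠ 0 := fun h => hz ⟨by simp [h], by simp [h], by simp [h]⟩
  have hray : MapsTo (fun t : ℝ => (t : ℂ) * z) (Ici 1) {z | ¬(z.im = 0 ∧ -1 ≤ z.re ∧ z.re ≤ 1)} :=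
    fun t ht => ofReal_mul_off_unitSegment hz ht
  have hlim := (tendsto_sub_cobounded_nhds_zero (eventually_cobounded_off_unitSegment.mono hs2)
    hsinf).norm.comp (tendsto_ofReal_mul_cobounded hz0)
  rw [norm_zero] at hlim
  simpa using lt_of_continuousOn_Ici_of_ne (f := fun t : ℝ => ‖(t : ℂ) * z - s ((t : ℂ) * z)‖)
    ((continuous_ofReal.mul continuous_const).continuousOn.sub
      (hs.continuousOn.comp (by fun_prop) hray)).norm
    (fun t ht => norm_sub_ne_one_of_sq_eq_sq_sub_one (hray ht) (hs2 _ (hray ht)))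
    (hlim.eventually_lt_const one_pos)

lemma re_neg_I_mul_conj_mul_div {ζ δ : ℂ} (hζ : ‖ζ‖ = 1) :
    (-I * conj ζ * (δ - ζ) / (δ - conj ζ)).re = ζ.im * (1 - normSq δ) / normSq (δ - conj ζ) := by
  have hζ' := normSq_eq_norm_sq ζ
  rw [hζ, normSq_apply] at hζ'
  rw [div_re, ← add_div]
  congr 1
  simp only [normSq_apply, mul_re, mul_im, sub_re, sub_im, neg_re, neg_im, conj_re, conj_im,
    I_re, I_im]
  linear_combination ζ.im * hζ'

lemma hasDerivAt_sqrt_one_sub_sq {x : ℝ} (hx : x ∈ Ioo (-1 : ℝ) 1) :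
    HasDerivAt (fun t : ℝ => √(1 - t ^ 2)) (-x / √(1 - x ^ 2)) x := by
  have hx2 : 0 < 1 - x ^ 2 := by nlinarith [hx.1, hx.2]
  convert ((hasDerivAt_pow 2 x).const_sub 1).sqrt hx2.ne' using 1
  field_simp
  norm_num
  ring

lemma sub_ofReal_ne_zero {z : ℂ} (hz : ¬(z.im = 0 ∧ -1 ≤ z.re ∧ z.re ≤ 1)) {x : ℝ}
    (hx : x ∈ Icc (-1 : ℝ) 1) : z - x ≠ 0 := by
  rintro h
  rw [sub_eq_zero.mp h] at hz
  exact hz ⟨ofReal_im x, by simpa using hx.1, by simpa using hx.2⟩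

noncomputable def semicirclePoint (x : ℝ) : ℂ := x + √(1 - x ^ 2) * I

lemma norm_semicirclePoint {x : ℝ} (hx : x ∈ Icc (-1 : ℝ) 1) : ‖semicirclePoint x‖ = 1 := by
  rw [semicirclePoint, norm_add_mul_I, Real.sq_sqrt (by nlinarith [hx.1, hx.2])]
  simp

lemma sub_conj_semicirclePoint_ne_zero {δ : ℂ} (hδ : ‖δ‖ < 1) {x : ℝ} (hx : x ∈ Icc (-1 : ℝ) 1) :
    δ - conj (semicirclePoint x) ≠ 0 := by
  rw [sub_ne_zero]
  rintro rfl
  rw [norm_conj, norm_semicirclePoint hx] at hδ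
  exact lt_irrefl _ hδ

noncomputable def semicircleLogArg (z w : ℂ) (x : ℝ) : ℂ :=
  (I * (1 - z * x) + w * √(1 - x ^ 2)) / (z - x)

noncomputable def semicirclePrimitive (z w : ℂ) (x : ℝ) : ℂ :=
  -I * w * log (semicircleLogArg z w x) + z * Real.arcsin x - √(1 - x ^ 2)

section

variable {z w : ℂ}

lemma semicircleLogArg_eq (hw : w ^ 2 = z ^ 2 - 1) (hδ : ‖z - w‖ < 1) {x : ℝ}
    (hx : x ∈ Icc (-1 : ℝ) 1) (hzx : z - x ≠ 0) :
    semicircleLogArg z w x = -I * conj (semicirclePoint x) * ((z - w) - semicirclePoint x)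
      / ((z - w) - conj (semicirclePoint x)) := by
  have hne := sub_conj_semicirclePoint_ne_zero hδ hx
  rw [semicircleLogArg, div_eq_div_iff hzx hne]
  simp only [semicirclePoint, map_add, map_mul, conj_ofReal, conj_I]
  set Y := √(1 - x ^ 2)
  have hY : (Y : ℂ) ^ 2 = 1 - x ^ 2 := by
    have : Y ^ 2 = 1 - x ^ 2 := Real.sq_sqrt (by nlinarith [hx.1, hx.2])
    exact_mod_cast this
  linear_combination (Y - w * x * Y + z * w * Y - z ^ 2 * Y - I * x * Y ^ 2 + I * z * Y ^ 2) * I_sq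
    + (I * x + I * w - I * z) * hY - Y * hw

lemma semicircleLogArg_re_pos (hz : ¬(z.im = 0 ∧ -1 ≤ z.re ∧ z.re ≤ 1)) (hw : w ^ 2 = z ^ 2 - 1)
    (hδ : ‖z - w‖ < 1) {x : ℝ} (hx : x ∈ Ioo (-1 : ℝ) 1) : 0 < (semicircleLogArg z w x).re := by
  have hx' := Ioo_subset_Icc_self hx
  rw [semicircleLogArg_eq hw hδ hx' (sub_ofReal_ne_zero hz hx'),
    re_neg_I_mul_conj_mul_div (norm_semicirclePoint hx')]
  have him : 0 < (semicirclePoint x).im := by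
    simpa [semicirclePoint] using Real.sqrt_pos.mpr (by nlinarith [hx.1, hx.2] : 0 < 1 - x ^ 2)
  have hδ2 : normSq (z - w) < 1 := by
    rw [normSq_eq_norm_sq]; nlinarith [norm_nonneg (z - w)]
  exact div_pos (mul_pos him (by linarith))
    (normSq_pos.mpr (sub_conj_semicirclePoint_ne_zero hδ hx'))

lemma semicircleLogArg_one (hz : ¬(z.im = 0 ∧ -1 ≤ z.re ∧ z.re ≤ 1)) (hw : w ^ 2 = z ^ 2 - 1)
    (hδ : ‖z - w‖ < 1) : semicircleLogArg z w 1 = -I := by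
  have h1 : (1 : ℝ) ∈ Icc (-1 : ℝ) 1 := by norm_num
  have hne := sub_conj_semicirclePoint_ne_zero hδ h1
  rw [semicircleLogArg_eq hw hδ h1 (sub_ofReal_ne_zero hz h1)]
  simp only [semicirclePoint, map_add, map_mul, conj_ofReal, conj_I] at hne ⊢
  norm_num at hne ⊢
  field_simp

lemma semicircleLogArg_neg_one (hz : ¬(z.im = 0 ∧ -1 ≤ z.re ∧ z.re ≤ 1))
    (hw : w ^ 2 = z ^ 2 - 1) (hδ : ‖z - w‖ < 1) : semicircleLogArg z w (-1) = I := by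
  have h1 : (-1 : ℝ) ∈ Icc (-1 : ℝ) 1 := by norm_num
  have hne := sub_conj_semicirclePoint_ne_zero hδ h1
  rw [semicircleLogArg_eq hw hδ h1 (sub_ofReal_ne_zero hz h1)]
  simp only [semicirclePoint, map_add, map_mul, conj_ofReal, conj_I] at hne ⊢
  norm_num at hne ⊢
  field_simp

lemma semicircleLogArg_mem_slitPlane (hz : ¬(z.im = 0 ∧ -1 ≤ z.re ∧ z.re ≤ 1))
    (hw : w ^ 2 = z ^ 2 - 1) (hδ : ‖z - w‖ < 1) {x : ℝ} (hx : x ∈ Icc (-1 : ℝ) 1) :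
    semicircleLogArg z w x ∈ slitPlane := by
  rcases eq_or_lt_of_le hx.1 with rfl | h1
  · rw [semicircleLogArg_neg_one hz hw hδ]; exact mem_slitPlane_iff.mpr (Or.inr (by simp))
  rcases eq_or_lt_of_le hx.2 with rfl | h2
  · rw [semicircleLogArg_one hz hw hδ]; exact mem_slitPlane_iff.mpr (Or.inr (by simp))
  exact Or.inl (semicircleLogArg_re_pos hz hw hδ ⟨h1, h2⟩)

lemma hasDerivAt_semicircleLogArg (hw : w ^ 2 = z ^ 2 - 1) {x : ℝ} (hx : x ∈ Ioo (-1 : ℝ) 1)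
    (hzx : z - x ≠ 0) :
    HasDerivAt (semicircleLogArg z w)
      (-I * w / (√(1 - x ^ 2) * (z - x)) * semicircleLogArg z w x) x := by
  have hx2 : 0 < 1 - x ^ 2 := by nlinarith [hx.1, hx.2]
  have hid : HasDerivAt (fun t : ℝ => (t : ℂ)) 1 x := hasDerivAt_id x |>.ofReal_comp
  have hN := (((hid.const_mul z).const_sub 1).const_mul I).add
    ((hasDerivAt_sqrt_one_sub_sq hx).ofReal_comp.const_mul w)
  have hp : HasDerivAt (semicircleLogArg z w) _ x := hN.div (hid.const_sub z) hzx
  refine hp.congr_deriv ?_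
  simp only [semicircleLogArg, Pi.add_apply]
  generalize hY : √(1 - x ^ 2) = Y
  have hY0 : (Y : ℂ) ≠ 0 := ofReal_ne_zero.mpr (hY ▸ (Real.sqrt_pos.mpr hx2).ne')
  have hY2 : (Y : ℂ) ^ 2 = 1 - x ^ 2 := by
    rw [← hY]; exact_mod_cast Real.sq_sqrt hx2.le
  push_cast
  field_simp
  linear_combination (w - z * w * x) * I_sq + w * hY2 + I * Y * hw

lemma hasDerivAt_semicirclePrimitive (hz : ¬(z.im = 0 ∧ -1 ≤ z.re ∧ z.re ≤ 1))
    (hw : w ^ 2 = z ^ 2 - 1) (hδ : ‖z - w‖ < 1) {x : ℝ} (hx : x ∈ Ioo (-1 : ℝ) 1) :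
    HasDerivAt (semicirclePrimitive z w) (√(1 - x ^ 2) / (z - x)) x := by
  have hx2 : 0 < 1 - x ^ 2 := by nlinarith [hx.1, hx.2]
  have hzx := sub_ofReal_ne_zero hz (Ioo_subset_Icc_self hx)
  have hpos := semicircleLogArg_re_pos hz hw hδ hx
  have hp0 : semicircleLogArg z w x ≠ 0 := fun h => by simp [h] at hpos
  have hlog := (hasDerivAt_semicircleLogArg hw hx hzx).clog_real (Or.inl hpos)
  rw [mul_div_cancel_right₀ _ hp0] at hlog
  have harcsin := (Real.hasDerivAt_arcsin hx.1.ne' hx.2.ne).ofReal_comp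
  have hF := ((hlog.const_mul (-I * w)).add (harcsin.const_mul z)).sub
    (hasDerivAt_sqrt_one_sub_sq hx).ofReal_comp
  refine hF.congr_deriv ?_
  generalize hY : √(1 - x ^ 2) = Y
  have hY0 : (Y : ℂ) ≠ 0 := ofReal_ne_zero.mpr (hY ▸ (Real.sqrt_pos.mpr hx2).ne')
  have hY2 : (Y : ℂ) ^ 2 = 1 - x ^ 2 := by
    rw [← hY]; exact_mod_cast Real.sq_sqrt hx2.le
  push_cast
  field_simp
  linear_combination w ^ 2 * I_sq - hw - hY2

lemma continuousOn_semicirclePrimitive (hz : ¬(z.im = 0 ∧ -1 ≤ z.re ∧ z.re ≤ 1))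
    (hw : w ^ 2 = z ^ 2 - 1) (hδ : ‖z - w‖ < 1) :
    ContinuousOn (semicirclePrimitive z w) (Icc (-1) 1) := by
  have hp : ContinuousOn (semicircleLogArg z w) (Icc (-1) 1) :=
    ContinuousOn.div (by fun_prop) (by fun_prop) fun x hx => sub_ofReal_ne_zero hz hx
  have hlog := hp.clog fun x hx => semicircleLogArg_mem_slitPlane hz hw hδ hx
  unfold semicirclePrimitive
  fun_prop

lemma integral_sqrt_one_sub_sq_div_sub (hz : ¬(z.im = 0 ∧ -1 ≤ z.re ∧ z.re ≤ 1))
    (hw : w ^ 2 = z ^ 2 - 1) (hδ : ‖z - w‖ < 1) :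
    ∫ x in (-1 : ℝ)..1, (√(1 - x ^ 2) : ℂ) / (z - x) = Real.pi * (z - w) := by
  have hint : IntervalIntegrable (fun x : ℝ => (√(1 - x ^ 2) : ℂ) / (z - x)) MeasureTheory.volume
      (-1) 1 := by
    refine ContinuousOn.intervalIntegrable ?_
    rw [uIcc_of_le (by norm_num)]
    exact ContinuousOn.div (by fun_prop) (by fun_prop) fun x hx => sub_ofReal_ne_zero hz hx
  rw [integral_eq_sub_of_hasDerivAt_of_le (by norm_num) (continuousOn_semicirclePrimitive hz hw hδ)
    (fun x hx => hasDerivAt_semicirclePrimitive hz hw hδ hx) hint]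
  simp only [semicirclePrimitive, semicircleLogArg_one hz hw hδ, semicircleLogArg_neg_one hz hw hδ,
    log_I, log_neg_I, Real.arcsin_one, Real.arcsin_neg_one]
  norm_num
  linear_combination (w * Real.pi) * I_sq

end

/-- For every `z ∈ ℂ \ [−1,1]`,
`∫_{−1}^{1} √(1−x²)/(z−x) dx = π (z − √(z²−1))`, where `s = √(·²−1)` is the branch
holomorphic on `ℂ \ [−1,1]` with `s(z)/z → 1` as `z → ∞`. -/
theorem stmt_16
    (s : ℂ → ℂ)
    (hs : DifferentiableOn ℂ s {z : ℂ | ¬(z.im = 0 ∧ -1 ≤ z.re ∧ z.re ≤ 1)})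
    (hs2 : ∀ z : ℂ, ¬(z.im = 0 ∧ -1 ≤ z.re ∧ z.re ≤ 1) → (s z) ^ 2 = z ^ 2 - 1)
    (hsinf : Filter.Tendsto (fun z => s z / z) (Bornology.cobounded ℂ) (nhds 1)) :
    ∀ z : ℂ, ¬(z.im = 0 ∧ -1 ≤ z.re ∧ z.re ≤ 1) →
      ∫ x in (-1 : ℝ)..1, (Real.sqrt (1 - x ^ 2) : ℂ) / (z - (x : ℂ))
        = (Real.pi : ℂ) * (z - s z) := fun _ hz =>
  integral_sqrt_one_sub_sq_div_sub hz (hs2 _ hz) (norm_sub_sqrt_branch_lt_one s hs hs2 hsinf hz)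
end

section
/- Let T_n denote the nth Chebyshev polynomial of the first kind, characterized by T_n(cos θ) = cos(nθ). For every z ∈ ℂ \ [−1, 1] and every n ≥ 0, ∫_{−1}^{1} T_n(x) / ((z − x) √(1 − x^2)) dx = π / (√(z^2 − 1) · (z + √(z^2 − 1))^n), where √(z^2 − 1) denotes the branch holomorphic on ℂ \ [−1, 1] satisfying √(z^2 − 1)/z → 1 as z → ∞. -/
/-!
Put `q = z - s z`, so that `q² - 2zq + 1 = 0` and `q (z + s z) = 1`. If `‖q‖ = 1` then
`z = (q + q̄)/2 = Re q ∈ [-1, 1]`; hence the continuous function `‖q‖` never takes the value `1`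
on the connected set `ℂ \ [-1, 1]`, it is small near infinity because `s z / z → 1`, and so
`‖q‖ < 1` everywhere.

The substitution `x = cos θ` turns the integral into `∫₀^π cos nθ / (z - cos θ) dθ`, which is half
of the same integral over `[0, 2π]`, and by the symmetry `θ ↦ 2π - θ` also half of
`∫₀^{2π} e^{inθ} / (z - cos θ) dθ`. With `w = e^{iθ}` one has
`z - cos θ = (w - q)(qw - 1) / (-2qw)`, so the latter is a contour integral over the unit circle
whose only pole inside is `w = q`, and the Cauchy integral formula gives `2π qⁿ / (z - q)`.
-/

open Complex Set Filter Metric MeasureTheory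
open scoped Real ComplexConjugate Topology

def cutPlane : Set ℂ := {z : ℂ | ¬(z.im = 0 ∧ -1 ≤ z.re ∧ z.re ≤ 1)}

lemma cutPlane_eq_union :
    cutPlane = (fun w ↦ w + 1) '' slitPlane ∪ (fun w ↦ -1 - w) '' slitPlane := by
  ext z
  simp only [cutPlane, mem_union, mem_ofPred_eq, mem_image, mem_slitPlane_iff]
  constructor
  · intro hz
    by_cases h : z.im = 0 ∧ 1 < z.re
    · left; exact ⟨z - 1, by simp [h.2], by ring⟩
    · right; refine ⟨-1 - z, ?_, by ring⟩
      simp only [sub_re, neg_re, one_re, sub_im, neg_im, one_im]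
      by_contra! h'
      apply hz
      refine ⟨by linarith [h'.2], by linarith [h'.1], ?_⟩
      by_contra! h''
      exact h ⟨by linarith [h'.2], h''⟩
  · rintro (⟨w, hw, rfl⟩ | ⟨w, hw, rfl⟩) ⟨him, hre₁, hre₂⟩
    · simp only [add_im, one_im, add_zero, add_re, one_re] at him hre₂
      rcases hw with hw | hw <;> [linarith; exact hw him]
    · simp only [sub_im, neg_im, one_im, sub_re, neg_re, one_re] at him hre₁
      rcases hw with hw | hw <;> [linarith; exact hw (by linarith)]

lemma isConnected_slitPlane : IsConnected slitPlane :=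
  (starConvex_one_slitPlane.isPathConnected one_mem_slitPlane).isConnected

lemma isConnected_cutPlane : IsConnected cutPlane := by
  rw [cutPlane_eq_union]
  refine (isConnected_slitPlane.image _ (by fun_prop)).union ⟨I, ?_, ?_⟩
    (isConnected_slitPlane.image _ (by fun_prop))
  · exact ⟨I - 1, by simp [mem_slitPlane_iff], by ring⟩
  · exact ⟨-1 - I, by simp [mem_slitPlane_iff], by ring⟩

lemma notMem_cutPlane_of_norm_eq_one {z q : ℂ} (hq : ‖q‖ = 1)
    (hquad : q ^ 2 - 2 * z * q + 1 = 0) : z ∉ cutPlane := by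
  have hq0 : q ≠ 0 := norm_ne_zero_iff.mp (by rw [hq]; exact one_ne_zero)
  have hinv : q⁻¹ = conj q := by
    rw [inv_def, normSq_eq_norm_sq, hq]; simp
  have hz : z = q.re := by
    have h2z : 2 * z = q + q⁻¹ := by field_simp; linear_combination -hquad
    rw [hinv, add_conj] at h2z
    push_cast at h2z; linear_combination h2z / 2
  have hre : |q.re| ≤ 1 := hq ▸ abs_re_le_norm q
  rw [hz]
  exact fun h ↦ h ⟨ofReal_im _, by simpa using (abs_le.mp hre).1, by simpa using (abs_le.mp hre).2⟩

section Branch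

variable {s : ℂ → ℂ}

lemma eventually_mem_cutPlane_and_norm_sub_lt_one (hs2 : ∀ z ∈ cutPlane, s z ^ 2 = z ^ 2 - 1)
    (hsinf : Tendsto (fun z ↦ s z / z) (Bornology.cobounded ℂ) (𝓝 1)) :
    ∀ᶠ z in Bornology.cobounded ℂ, z ∈ cutPlane ∧ ‖z - s z‖ < 1 := by
  filter_upwards [tendsto_norm_cobounded_atTop.eventually_gt_atTop 1,
    Metric.tendsto_nhds.mp hsinf 1 one_pos] with z hz hsz
  have hzU : z ∈ cutPlane := fun ⟨him, hre₁, hre₂⟩ ↦ by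
    have : ‖z‖ ≤ 1 := by
      rw [← re_add_im z, him]; simpa using abs_le.mpr ⟨hre₁, hre₂⟩
    linarith
  have hz0 : z ≠ 0 := norm_pos_iff.mp (by linarith)
  have hsum : 1 < ‖z + s z‖ := by
    have h1 : 1 < ‖1 + s z / z‖ := by
      have := norm_sub_norm_le (2 : ℂ) (1 - s z / z)
      rw [Complex.norm_two] at this
      rw [dist_eq_norm, norm_sub_rev] at hsz
      rw [show (1 : ℂ) + s z / z = 2 - (1 - s z / z) by ring]
      linarith
    rw [show z + s z = z * (1 + s z / z) by field_simp, norm_mul]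
    nlinarith
  have hprod : ‖z - s z‖ * ‖z + s z‖ = 1 := by
    rw [← norm_mul, show (z - s z) * (z + s z) = 1 by linear_combination -hs2 z hzU, norm_one]
  exact ⟨hzU, by nlinarith [norm_nonneg (z - s z)]⟩

lemma norm_sub_lt_one_of_sq_eq_of_tendsto (hs : ContinuousOn s cutPlane)
    (hs2 : ∀ z ∈ cutPlane, s z ^ 2 = z ^ 2 - 1)
    (hsinf : Tendsto (fun z ↦ s z / z) (Bornology.cobounded ℂ) (𝓝 1)) :
    ∀ z ∈ cutPlane, ‖z - s z‖ < 1 := by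
  intro z hz
  by_contra! hge
  obtain ⟨z₀, hz₀, hlt⟩ := (eventually_mem_cutPlane_and_norm_sub_lt_one hs2 hsinf).exists
  obtain ⟨w, hw, hnorm⟩ := isConnected_cutPlane.isPreconnected.intermediate_value hz₀ hz
    (f := fun z ↦ ‖z - s z‖) (by fun_prop) ⟨hlt.le, hge⟩
  exact notMem_cutPlane_of_norm_eq_one hnorm (by linear_combination hs2 w hw) hw

end Branch

section Integrals

variable {z q : ℂ}

lemma sub_cos_eq_mul (hq0 : q ≠ 0) (hquad : q ^ 2 - 2 * z * q + 1 = 0) (θ : ℝ) :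
    z - cos θ = (exp (θ * I) - q) * (q * exp (θ * I) - 1) / (-2 * q * exp (θ * I)) := by
  have hcos : 2 * cos θ * exp (θ * I) = exp (θ * I) ^ 2 + 1 := by
    rw [two_cos, neg_mul, exp_neg]; field_simp
  rw [eq_div_iff (by simp [hq0])]
  linear_combination exp (θ * I) * hquad + q * hcos

lemma sub_cos_ne_zero (hq : ‖q‖ < 1) (hquad : q ^ 2 - 2 * z * q + 1 = 0) (θ : ℝ) :
    z - cos θ ≠ 0 := by
  have hq0 : q ≠ 0 := by rintro rfl; norm_num at hquad
  have hw : ‖exp (θ * I)‖ = 1 := norm_exp_ofReal_mul_I θ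
  rw [sub_cos_eq_mul hq0 hquad θ]
  refine div_ne_zero (mul_ne_zero (sub_ne_zero.mpr ?_) (sub_ne_zero.mpr ?_)) (by simp [hq0])
  · rintro h; rw [h] at hw; linarith
  · intro h
    have : ‖q * exp (θ * I)‖ = 1 := by rw [h, norm_one]
    rw [norm_mul, hw, mul_one] at this; linarith

lemma integral_exp_mul_I_pow_div_sub_cos (hq : ‖q‖ < 1)
    (hquad : q ^ 2 - 2 * z * q + 1 = 0) (m : ℕ) :
    ∫ θ in (0 : ℝ)..2 * π, exp (θ * I) ^ m / (z - cos θ) = 2 * π * q ^ m / (z - q) := by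
  have hq0 : q ≠ 0 := by rintro rfl; norm_num at hquad
  have hqw : ∀ w : ℂ, ‖w‖ ≤ 1 → q * w - 1 ≠ 0 := fun w hw ↦ by
    refine sub_ne_zero.mpr fun h ↦ ?_
    have : ‖q * w‖ < 1 := by rw [norm_mul]; nlinarith [norm_nonneg q, norm_nonneg w]
    rw [h, norm_one] at this; exact lt_irrefl _ this
  set f : ℂ → ℂ := fun w ↦ 2 * I * q * w ^ m / (q * w - 1)
  have hf : DifferentiableOn ℂ f (closedBall 0 1) :=
    DifferentiableOn.div (by fun_prop) (by fun_prop) fun w hw ↦ hqw w (mem_closedBall_zero_iff.mp hw)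
  have hintegrand : ∀ θ : ℝ, exp (θ * I) ^ m / (z - cos θ)
      = deriv (circleMap 0 1) θ • ((circleMap 0 1 θ - q)⁻¹ • f (circleMap 0 1 θ)) := by
    intro θ
    have hw : ‖exp (θ * I)‖ = 1 := norm_exp_ofReal_mul_I θ
    have hwq : exp (θ * I) - q ≠ 0 := sub_ne_zero.mpr fun h ↦ by rw [h] at hw; linarith
    have : exp (θ * I) * q - 1 ≠ 0 := by rw [mul_comm]; exact hqw _ hw.le
    simp only [deriv_circleMap, circleMap_zero, ofReal_one, one_mul, smul_eq_mul, f,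
      sub_cos_eq_mul hq0 hquad θ]
    field_simp
    linear_combination -I_sq
  have hzq : z - q = -(q ^ 2 - 1) / (2 * q) := by field_simp; linear_combination -hquad
  have hq2 : q ^ 2 - 1 ≠ 0 := by rw [sq]; exact hqw q hq.le
  calc ∫ θ in (0 : ℝ)..2 * π, exp (θ * I) ^ m / (z - cos θ)
      = ∮ w in C(0, 1), (w - q)⁻¹ • f w := by simp only [circleIntegral, hintegrand]
    _ = (2 * π * I : ℂ) • f q := hf.circleIntegral_sub_inv_smul (mem_ball_zero_iff.mpr hq)
    _ = 2 * π * q ^ m / (z - q) := by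
      rw [hzq]; simp only [smul_eq_mul, f]; field_simp; linear_combination I_sq

lemma integral_zero_two_mul_eq_two_smul_of_symm {E : Type*} [NormedAddCommGroup E]
    [NormedSpace ℝ E] {f : ℝ → E} {a : ℝ} (hf : IntervalIntegrable f volume 0 (2 * a))
    (hsymm : ∀ x, f (2 * a - x) = f x) :
    ∫ x in (0 : ℝ)..2 * a, f x = (2 : ℝ) • ∫ x in (0 : ℝ)..a, f x := by
  have ha : a ∈ uIcc 0 (2 * a) := by
    rcases le_total 0 a with h | h
    · exact mem_uIcc_of_le h (by linarith)
    · exact mem_uIcc_of_ge (by linarith) h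
  have hhalf : ∫ x in a..2 * a, f x = ∫ x in (0 : ℝ)..a, f x := by
    have := intervalIntegral.integral_comp_sub_left f (2 * a) (a := 0) (b := a)
    simp only [hsymm, sub_zero] at this
    rw [this, two_mul, add_sub_cancel_right]
  rw [← intervalIntegral.integral_add_adjacent_intervals (b := a)
    (hf.mono_set (uIcc_subset_uIcc left_mem_uIcc ha))
    (hf.mono_set (uIcc_subset_uIcc ha right_mem_uIcc)), hhalf, two_smul]

lemma integral_cos_nat_mul_div_sub_cos (hq : ‖q‖ < 1)
    (hquad : q ^ 2 - 2 * z * q + 1 = 0) (n : ℕ) :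
    ∫ θ in (0 : ℝ)..π, cos (n * θ) / (z - cos θ) = π * q ^ n / (z - q) := by
  set h : ℝ → ℂ := fun θ ↦ exp (θ * I) ^ n / (z - cos θ)
  have hcont : Continuous h := Continuous.div (by fun_prop) (by fun_prop) (sub_cos_ne_zero hq hquad)
  have hreflect : ∀ θ : ℝ, cos (n * θ) / (z - cos θ) = (h θ + h (2 * π - θ)) / 2 := by
    intro θ
    have hexp : exp (↑(2 * π - θ) * I) = (exp (θ * I))⁻¹ := by
      push_cast; rw [sub_mul, exp_sub, exp_two_pi_mul_I, one_div]
    have hcos : cos ↑(2 * π - θ) = cos θ := by push_cast; exact cos_two_pi_sub _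
    have hcosn : cos (n * θ) = (exp (θ * I) ^ n + (exp (θ * I))⁻¹ ^ n) / 2 := by
      rw [cos, ← exp_nat_mul, inv_pow, ← exp_nat_mul, ← exp_neg]; ring_nf
    simp only [h, hexp, hcos, hcosn]
    ring
  have hfull : ∫ θ in (0 : ℝ)..2 * π, cos (n * θ) / (z - cos θ) = 2 * π * q ^ n / (z - q) := by
    have hsymm := intervalIntegral.integral_comp_sub_left h (2 * π) (a := 0) (b := 2 * π)
    simp only [sub_zero, sub_self] at hsymm
    simp only [hreflect]
    rw [intervalIntegral.integral_div, intervalIntegral.integral_add (hcont.intervalIntegrable _ _)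
      ((by fun_prop : Continuous fun θ ↦ h (2 * π - θ)).intervalIntegrable _ _),
      hsymm, integral_exp_mul_I_pow_div_sub_cos hq hquad]
    ring
  have hg : Continuous fun θ : ℝ ↦ cos (n * θ) / (z - cos θ) :=
    Continuous.div (by fun_prop) (by fun_prop) (sub_cos_ne_zero hq hquad)
  rw [integral_zero_two_mul_eq_two_smul_of_symm (hg.intervalIntegrable _ _)
    (fun θ ↦ by rw [hreflect, hreflect, sub_sub_cancel, add_comm]), real_smul] at hfull
  push_cast at hfull
  linear_combination hfull / 2

end Integrals

lemma integral_neg_one_one_eq_integral_sin_smul_comp_cos {E : Type*} [NormedAddCommGroup E]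
    [NormedSpace ℝ E] (g : ℝ → E) :
    ∫ x in (-1 : ℝ)..1, g x = ∫ θ in Ioo 0 π, Real.sin θ • g (Real.cos θ) := by
  rw [intervalIntegral.integral_of_le (by norm_num), ← integral_Icc_eq_integral_Ioc,
    ← Real.bijOn_cos.image_eq, integral_image_eq_integral_abs_deriv_smul measurableSet_Icc
      (fun θ _ ↦ (Real.hasDerivAt_cos θ).hasDerivWithinAt) Real.injOn_cos,
    integral_Icc_eq_integral_Ioo]
  refine setIntegral_congr_fun measurableSet_Ioo fun θ hθ ↦ ?_
  rw [abs_neg, abs_of_pos (Real.sin_pos_of_pos_of_lt_pi hθ.1 hθ.2)]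

lemma integral_chebyshevT_div_sub_mul_sqrt (z : ℂ) (n : ℕ) :
    ∫ x in (-1 : ℝ)..1,
        (Polynomial.Chebyshev.T ℂ (n : ℤ)).eval (x : ℂ) / ((z - (x : ℂ)) * (Real.sqrt (1 - x ^ 2) : ℂ))
      = ∫ θ in (0 : ℝ)..π, cos (n * θ) / (z - cos θ) := by
  rw [integral_neg_one_one_eq_integral_sin_smul_comp_cos,
    intervalIntegral.integral_of_le Real.pi_pos.le, integral_Ioc_eq_integral_Ioo]
  refine setIntegral_congr_fun measurableSet_Ioo fun θ hθ ↦ ?_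
  have hsin : 0 < Real.sin θ := Real.sin_pos_of_pos_of_lt_pi hθ.1 hθ.2
  have hsqrt : Real.sqrt (1 - Real.cos θ ^ 2) = Real.sin θ := by
    rw [← Real.sin_sq, Real.sqrt_sq hsin.le]
  simp only [hsqrt, ofReal_cos, Polynomial.Chebyshev.T_complex_cos, real_smul, ofReal_sin]
  push_cast
  rw [mul_comm, div_mul_eq_mul_div, mul_div_mul_right _ _ (by exact_mod_cast hsin.ne')]

/-- For the Chebyshev polynomials of the first kind `T_n`
(`T_n(cos θ) = cos (n θ)`, Mathlib's `Polynomial.Chebyshev.T`), every `z ∈ ℂ \ [−1,1]`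
and every `n ≥ 0`:
`∫_{−1}^{1} T_n(x) / ((z−x) √(1−x²)) dx = π / (√(z²−1) (z + √(z²−1))^n)`,
where `s = √(·²−1)` is the branch holomorphic on `ℂ \ [−1,1]` with `s(z)/z → 1` as
`z → ∞` (so that `Φ(z) = z + s(z)` is the inverse of the Joukowski map). -/
theorem stmt_17
    (s : ℂ → ℂ)
    (hs : DifferentiableOn ℂ s {z : ℂ | ¬(z.im = 0 ∧ -1 ≤ z.re ∧ z.re ≤ 1)})
    (hs2 : ∀ z : ℂ, ¬(z.im = 0 ∧ -1 ≤ z.re ∧ z.re ≤ 1) → (s z) ^ 2 = z ^ 2 - 1)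
    (hsinf : Filter.Tendsto (fun z => s z / z) (Bornology.cobounded ℂ) (nhds 1))
    (n : ℕ) :
    ∀ z : ℂ, ¬(z.im = 0 ∧ -1 ≤ z.re ∧ z.re ≤ 1) →
      ∫ x in (-1 : ℝ)..1,
          (Polynomial.Chebyshev.T ℂ (n : ℤ)).eval (x : ℂ)
            / ((z - (x : ℂ)) * (Real.sqrt (1 - x ^ 2) : ℂ))
        = (Real.pi : ℂ) / (s z * (z + s z) ^ n) := by
  intro z hz
  have hq : ‖z - s z‖ < 1 := norm_sub_lt_one_of_sq_eq_of_tendsto hs.continuousOn hs2 hsinf z hz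
  have hquad : (z - s z) ^ 2 - 2 * z * (z - s z) + 1 = 0 := by linear_combination hs2 z hz
  have hinv : z - s z = (z + s z)⁻¹ :=
    eq_inv_of_mul_eq_one_left (by linear_combination -hs2 z hz)
  rw [integral_chebyshevT_div_sub_mul_sqrt, integral_cos_nat_mul_div_sub_cos hq hquad,
    sub_sub_cancel, hinv, inv_pow]
  ring
end
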